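/- arXiv:2103.08883 — 4 statements merged into one kernel-verified Lean document; each statement's English description precedes it below -/
import Mathlib

section
/- Let Λ be an Artin algebra and 0 → A →f→ B →g→ C → 0 an almost split sequence in mod Λ. Then the sequence 0 → (A →id→ A) → (A →f→ B) → (0 → C) → 0 in H(Λ), whose left map is the pair (id_A, f) and whose right map is the pair (0, g), is an almost split sequence in H(Λ) ending at (0 → C). -/
universe u

section Core

variable (Λ : Type u) [Ring Λ]

/-- A module is indecomposable: it is nonzero and admits no nontrivial direct sum
decomposition. -/
def IsIndecMod (M : Type u) [AddCommGroup M] [Module Λ M] : Prop :=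
  Nontrivial M ∧ ∀ N₁ N₂ : Submodule Λ M, IsCompl N₁ N₂ → N₁ = ⊥ ∨ N₂ = ⊥

/-- A linear map is a split epimorphism if it admits a section. -/
def IsSplitEpiMod {M N : Type u} [AddCommGroup M] [Module Λ M] [AddCommGroup N] [Module Λ N]
    (g : M →ₗ[Λ] N) : Prop :=
  ∃ s : N →ₗ[Λ] M, g ∘ₗ s = LinearMap.id

/-- A linear map is a split monomorphism if it admits a retraction. -/
def IsSplitMonoMod {M N : Type u} [AddCommGroup M] [Module Λ M] [AddCommGroup N] [Module Λ N]
    (f : M →ₗ[Λ] N) : Prop :=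
  ∃ r : N →ₗ[Λ] M, r ∘ₗ f = LinearMap.id

/-- `0 → A → B → C → 0` is an almost split (Auslander-Reiten) sequence in `mod Λ`. -/
structure IsAlmostSplitSeq {A B C : Type u} [AddCommGroup A] [Module Λ A]
    [AddCommGroup B] [Module Λ B] [AddCommGroup C] [Module Λ C]
    (f : A →ₗ[Λ] B) (g : B →ₗ[Λ] C) : Prop where
  finA : Module.Finite Λ A
  finB : Module.Finite Λ B
  finC : Module.Finite Λ C
  inj : Function.Injective f
  surj : Function.Surjective g
  exact : LinearMap.range f = LinearMap.ker g
  not_split : ¬ IsSplitEpiMod Λ g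
  indecA : IsIndecMod Λ A
  indecC : IsIndecMod Λ C
  lift : ∀ (X : Type u) [AddCommGroup X] [Module Λ X], Module.Finite Λ X →
    ∀ h : X →ₗ[Λ] C, ¬ IsSplitEpiMod Λ h → ∃ k : X →ₗ[Λ] B, g ∘ₗ k = h

/-- `N ≅ τ M`, expressed through the defining property of the Auslander-Reiten
translation: `N` is the starting term of an almost split sequence ending at `M`. -/
def IsARTranslateOf (N M : Type u) [AddCommGroup N] [Module Λ N]
    [AddCommGroup M] [Module Λ M] : Prop :=
  ∃ (B : Type u) (_ : AddCommGroup B) (_ : Module Λ B)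
    (f : N →ₗ[Λ] B) (g : B →ₗ[Λ] M), IsAlmostSplitSeq Λ f g

/-- `p : P → M` is a projective cover: `P` is projective, `p` is surjective and
`ker p` is superfluous in `P`. -/
structure IsProjCover {P M : Type u} [AddCommGroup P] [Module Λ P]
    [AddCommGroup M] [Module Λ M] (p : P →ₗ[Λ] M) : Prop where
  proj : Module.Projective Λ P
  surj : Function.Surjective p
  superfluous : ∀ N : Submodule Λ P, N ⊔ LinearMap.ker p = ⊤ → N = ⊤

/-- `e : M → I` is an injective envelope: `I` is injective, `e` is injective and
the image of `e` is essential in `I`. -/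
structure IsInjEnv {M I : Type u} [AddCommGroup M] [Module Λ M]
    [AddCommGroup I] [Module Λ I] (e : M →ₗ[Λ] I) : Prop where
  inj_obj : Module.Injective Λ I
  inj : Function.Injective e
  essential : ∀ N : Submodule Λ I, N ⊓ LinearMap.range e = ⊥ → N = ⊥

/-- `P₁ →α→ P₀ →π→ C → 0` is a minimal projective presentation. -/
structure IsMinProjPres {P₁ P₀ C : Type u} [AddCommGroup P₁] [Module Λ P₁]
    [AddCommGroup P₀] [Module Λ P₀] [AddCommGroup C] [Module Λ C]
    (α : P₁ →ₗ[Λ] P₀) (π : P₀ →ₗ[Λ] C) : Prop where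
  cover : IsProjCover Λ π
  proj₁ : Module.Projective Λ P₁
  exact : LinearMap.range α = LinearMap.ker π
  superfluous : ∀ N : Submodule Λ P₁, N ⊔ LinearMap.ker α = ⊤ → N = ⊤

/-- `f : A → B` is a minimal left almost split map in `mod Λ`. -/
def IsMinLeftAlmostSplit {A B : Type u} [AddCommGroup A] [Module Λ A]
    [AddCommGroup B] [Module Λ B] (f : A →ₗ[Λ] B) : Prop :=
  ¬ IsSplitMonoMod Λ f ∧
  (∀ (X : Type u) [AddCommGroup X] [Module Λ X], Module.Finite Λ X →
    ∀ u : A →ₗ[Λ] X, ¬ IsSplitMonoMod Λ u → ∃ w : B →ₗ[Λ] X, w ∘ₗ f = u) ∧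
  ∀ φ : B →ₗ[Λ] B, φ ∘ₗ f = f → Function.Bijective φ

/-- `g : C → D` is a minimal right almost split map in `mod Λ`. -/
def IsMinRightAlmostSplit {C D : Type u} [AddCommGroup C] [Module Λ C]
    [AddCommGroup D] [Module Λ D] (g : C →ₗ[Λ] D) : Prop :=
  ¬ IsSplitEpiMod Λ g ∧
  (∀ (X : Type u) [AddCommGroup X] [Module Λ X], Module.Finite Λ X →
    ∀ u : X →ₗ[Λ] D, ¬ IsSplitEpiMod Λ u → ∃ w : X →ₗ[Λ] C, g ∘ₗ w = u) ∧
  ∀ φ : C →ₗ[Λ] C, g ∘ₗ φ = g → Function.Bijective φ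

/-- The Jacobson radical of a module: the intersection of its maximal submodules. -/
def modRad (M : Type u) [AddCommGroup M] [Module Λ M] : Submodule Λ M :=
  sInf {N : Submodule Λ M | IsCoatom N}

/-- The socle of a module: the sum of its simple submodules. -/
def modSoc (M : Type u) [AddCommGroup M] [Module Λ M] : Submodule Λ M :=
  sSup {N : Submodule Λ M | IsAtom N}

/-- An object of the morphism category `H(Λ)`: a homomorphism `f : X → Y` of
`Λ`-modules. -/
structure HObj : Type (u + 1) where
  X : Type u
  Y : Type u
  [ax : AddCommGroup X]
  [mx : Module Λ X]
  [ay : AddCommGroup Y]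
  [my : Module Λ Y]
  f : X →ₗ[Λ] Y

attribute [instance] HObj.ax HObj.mx HObj.ay HObj.my

variable {Λ}

/-- The object of `H(Λ)` determined by a linear map. -/
def HObj.of {X Y : Type u} [AddCommGroup X] [Module Λ X] [AddCommGroup Y] [Module Λ Y]
    (f : X →ₗ[Λ] Y) : HObj Λ :=
  ⟨X, Y, f⟩

@[simp] lemma HObj.of_f {X Y : Type u} [AddCommGroup X] [Module Λ X] [AddCommGroup Y]
    [Module Λ Y] (f : X →ₗ[Λ] Y) : (HObj.of f).f = f := rfl

/-- The object `(0 → P)` of `H(Λ)`. -/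
def HObj.fromZero (P : Type u) [AddCommGroup P] [Module Λ P] : HObj Λ :=
  HObj.of (0 : PUnit.{u+1} →ₗ[Λ] P)

/-- The object `(P → 0)` of `H(Λ)`. -/
def HObj.toZero (P : Type u) [AddCommGroup P] [Module Λ P] : HObj Λ :=
  HObj.of (0 : P →ₗ[Λ] PUnit.{u+1})

/-- The object `(P →id→ P)` of `H(Λ)`. -/
def HObj.ofId (P : Type u) [AddCommGroup P] [Module Λ P] : HObj Λ :=
  HObj.of (LinearMap.id : P →ₗ[Λ] P)

/-- A morphism in the morphism category `H(Λ)`: a pair of linear maps giving a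
commutative square. -/
@[ext] structure HHom (M N : HObj Λ) where
  h₁ : M.X →ₗ[Λ] N.X
  h₂ : M.Y →ₗ[Λ] N.Y
  comm : N.f ∘ₗ h₁ = h₂ ∘ₗ M.f

/-- The identity morphism of `H(Λ)`. -/
def HHom.id (M : HObj Λ) : HHom M M :=
  ⟨LinearMap.id, LinearMap.id, by simp⟩

/-- Composition in `H(Λ)`. -/
def HHom.comp {M N P : HObj Λ} (g : HHom N P) (f : HHom M N) : HHom M P :=
  ⟨g.h₁ ∘ₗ f.h₁, g.h₂ ∘ₗ f.h₂, by
    ext x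
    have hg := LinearMap.congr_fun g.comm (f.h₁ x)
    have hf := LinearMap.congr_fun f.comm x
    simp only [LinearMap.comp_apply] at hg hf ⊢
    rw [hg, hf]⟩

/-- An object of `H(Λ)` lies in the morphism category of finitely generated
modules. -/
def HObj.Fin (M : HObj Λ) : Prop :=
  Module.Finite Λ M.X ∧ Module.Finite Λ M.Y

/-- Split epimorphisms in `H(Λ)`. -/
def IsSplitEpiH {M N : HObj Λ} (v : HHom M N) : Prop :=
  ∃ s : HHom N M, v.comp s = HHom.id N

/-- Split monomorphisms in `H(Λ)`. -/
def IsSplitMonoH {M N : HObj Λ} (u : HHom M N) : Prop :=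
  ∃ r : HHom N M, r.comp u = HHom.id M

/-- Direct sum in `H(Λ)`. -/
def HObj.dsum (M N : HObj Λ) : HObj Λ :=
  HObj.of (M.f.prodMap N.f)

/-- Isomorphism of objects of `H(Λ)`. -/
structure HIso (M N : HObj Λ) where
  e₁ : M.X ≃ₗ[Λ] N.X
  e₂ : M.Y ≃ₗ[Λ] N.Y
  comm : ∀ x, N.f (e₁ x) = e₂ (M.f x)

/-- An object of `H(Λ)` is indecomposable: it is nonzero, and in any way of writing
it as a direct sum of two subobjects, one of the two is zero. -/
def IsIndecH (M : HObj Λ) : Prop :=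
  (Nontrivial M.X ∨ Nontrivial M.Y) ∧
  ∀ (U₁ U₂ : Submodule Λ M.X) (V₁ V₂ : Submodule Λ M.Y),
    IsCompl U₁ U₂ → IsCompl V₁ V₂ →
    Submodule.map M.f U₁ ≤ V₁ → Submodule.map M.f U₂ ≤ V₂ →
    (U₁ = ⊥ ∧ V₁ = ⊥) ∨ (U₂ = ⊥ ∧ V₂ = ⊥)

/-- Projective objects of `H(Λ)` (lifting property against epimorphisms). -/
def IsProjH (M : HObj Λ) : Prop :=
  ∀ (B C : HObj Λ), B.Fin → C.Fin → ∀ v : HHom B C,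
    Function.Surjective v.h₁ → Function.Surjective v.h₂ →
    ∀ h : HHom M C, ∃ k : HHom M B, v.comp k = h

/-- Injective objects of `H(Λ)` (extension property along monomorphisms). -/
def IsInjH (M : HObj Λ) : Prop :=
  ∀ (A B : HObj Λ), A.Fin → B.Fin → ∀ u : HHom A B,
    Function.Injective u.h₁ → Function.Injective u.h₂ →
    ∀ h : HHom A M, ∃ k : HHom B M, k.comp u = h

/-- `0 → A →u→ B →v→ C → 0` is an almost split sequence in `H(Λ)`. -/
structure IsAlmostSplitSeqH {A B C : HObj Λ} (u : HHom A B) (v : HHom B C) : Prop where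
  finA : A.Fin
  finB : B.Fin
  finC : C.Fin
  inj₁ : Function.Injective u.h₁
  inj₂ : Function.Injective u.h₂
  surj₁ : Function.Surjective v.h₁
  surj₂ : Function.Surjective v.h₂
  exact₁ : LinearMap.range u.h₁ = LinearMap.ker v.h₁
  exact₂ : LinearMap.range u.h₂ = LinearMap.ker v.h₂
  not_split : ¬ IsSplitEpiH v
  indecA : IsIndecH A
  indecC : IsIndecH C
  lift : ∀ T : HObj Λ, T.Fin → ∀ h : HHom T C, ¬ IsSplitEpiH h →
    ∃ k : HHom T B, v.comp k = h

/-- `τ_H(X) ≅ Y`, expressed through the defining property of the Auslander-Reiten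
translation in `H(Λ)`: `Y` is the starting term of an almost split sequence in
`H(Λ)` ending at `X`. -/
def TauHRel (Y X : HObj Λ) : Prop :=
  ∃ (B : HObj Λ) (u : HHom Y B) (v : HHom B X), IsAlmostSplitSeqH u v

end Core

/-!
A morphism into `(0 → C)` is determined by its second component, and it is a split epimorphism
in `H(Λ)` exactly when that component is one in `mod Λ`. Hence a morphism `t : T → (0 → C)`
that is not a split epimorphism has a second component `t₂` that lifts along `g` to some
`k₂ : T.Y → B`. The first component of the lift is then forced: `g ∘ k₂ ∘ T.f = t₂ ∘ T.f = 0`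
puts the image of `k₂ ∘ T.f` in `ker g = range f`, and `f` is injective. The end terms
`(A →id→ A)` and `(0 → C)` are indecomposable because `A` and `C` are.
-/

variable {Λ : Type u} [Ring Λ]

theorem exists_comp_eq_of_injective_of_range_le {X A B : Type u} [AddCommGroup X] [Module Λ X]
    [AddCommGroup A] [Module Λ A] [AddCommGroup B] [Module Λ B]
    {f : A →ₗ[Λ] B} (hf : Function.Injective f) {φ : X →ₗ[Λ] B}
    (hφ : LinearMap.range φ ≤ LinearMap.range f) : ∃ ψ : X →ₗ[Λ] A, f ∘ₗ ψ = φ := by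
  let e := LinearEquiv.ofInjective f hf
  refine ⟨e.symm.toLinearMap ∘ₗ φ.codRestrict _ fun x => hφ ⟨x, rfl⟩, ?_⟩
  ext x
  simp [e]

instance HObj.subsingleton_fromZero_X (C : Type u) [AddCommGroup C] [Module Λ C] :
    Subsingleton (HObj.fromZero (Λ := Λ) C).X :=
  inferInstanceAs (Subsingleton PUnit)

theorem HObj.fin_fromZero {C : Type u} [AddCommGroup C] [Module Λ C] (hC : Module.Finite Λ C) :
    (HObj.fromZero (Λ := Λ) C).Fin :=
  ⟨inferInstanceAs (Module.Finite Λ PUnit.{u + 1}), hC⟩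

theorem isIndecH_ofId {A : Type u} [AddCommGroup A] [Module Λ A] (hA : IsIndecMod Λ A) :
    IsIndecH (HObj.ofId (Λ := Λ) A) := by
  refine ⟨Or.inl hA.1, fun U₁ U₂ V₁ V₂ hU hV hUV₁ hUV₂ => ?_⟩
  -- a summand `Uᵢ = ⊥` forces `Uⱼ = ⊤ ≤ Vⱼ`, hence `Vᵢ = ⊥`
  have hle₁ : U₁ ≤ V₁ := fun x hx => hUV₁ ⟨x, hx, rfl⟩
  have hle₂ : U₂ ≤ V₂ := fun x hx => hUV₂ ⟨x, hx, rfl⟩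
  rcases hA.2 U₁ U₂ hU with hU₁ | hU₂
  · have hV₂ : V₂ = ⊤ := top_le_iff.mp (eq_top_of_isCompl_bot (hU₁ ▸ hU).symm ▸ hle₂)
    exact Or.inl ⟨hU₁, eq_bot_of_isCompl_top (hV₂ ▸ hV)⟩
  · have hV₁ : V₁ = ⊤ := top_le_iff.mp (eq_top_of_isCompl_bot (hU₂ ▸ hU) ▸ hle₁)
    exact Or.inr ⟨hU₂, eq_bot_of_isCompl_top (hV₁ ▸ hV).symm⟩

theorem isIndecH_fromZero {C : Type u} [AddCommGroup C] [Module Λ C] (hC : IsIndecMod Λ C) :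
    IsIndecH (HObj.fromZero (Λ := Λ) C) := by
  refine ⟨Or.inr hC.1, fun U₁ U₂ V₁ V₂ _ hV _ _ => ?_⟩
  rcases hC.2 V₁ V₂ hV with hV₁ | hV₂
  · exact Or.inl ⟨Submodule.eq_bot_of_subsingleton, hV₁⟩
  · exact Or.inr ⟨Submodule.eq_bot_of_subsingleton, hV₂⟩

namespace HHom

variable {C : Type u} [AddCommGroup C] [Module Λ C] {M : HObj Λ}

theorem ext_fromZero {v w : HHom M (HObj.fromZero C)} (h : v.h₂ = w.h₂) : v = w :=
  HHom.ext (LinearMap.ext fun _ => Subsingleton.elim _ _) h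

theorem h₂_comp_f_fromZero (v : HHom M (HObj.fromZero C)) : v.h₂ ∘ₗ M.f = 0 :=
  v.comm.symm

def ofFromZero (s : C →ₗ[Λ] M.Y) : HHom (HObj.fromZero C) M :=
  ⟨0, s, by ext x; simp [Subsingleton.elim x 0]⟩

end HHom

theorem isSplitEpiH_fromZero_iff {C : Type u} [AddCommGroup C] [Module Λ C] {M : HObj Λ}
    (v : HHom M (HObj.fromZero C)) : IsSplitEpiH v ↔ IsSplitEpiMod Λ v.h₂ := by
  constructor
  · rintro ⟨s, hs⟩
    exact ⟨s.h₂, congrArg HHom.h₂ hs⟩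
  · rintro ⟨s, hs⟩
    exact ⟨HHom.ofFromZero s, HHom.ext_fromZero hs⟩

theorem HHom.exists_comp_eq_of_lift_h₂ {A B C : Type u} [AddCommGroup A] [Module Λ A]
    [AddCommGroup B] [Module Λ B] [AddCommGroup C] [Module Λ C] {f : A →ₗ[Λ] B} {g : B →ₗ[Λ] C}
    (hf : Function.Injective f) (hfg : LinearMap.range f = LinearMap.ker g)
    (v : HHom (HObj.of f) (HObj.fromZero C)) (hv : v.h₂ = g) {T : HObj Λ}
    (t : HHom T (HObj.fromZero C)) {k₂ : T.Y →ₗ[Λ] B} (hk₂ : g ∘ₗ k₂ = t.h₂) :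
    ∃ k : HHom T (HObj.of f), v.comp k = t := by
  have hrange : LinearMap.range (k₂ ∘ₗ T.f) ≤ LinearMap.range f := by
    rintro _ ⟨x, rfl⟩
    rw [hfg, LinearMap.mem_ker, ← LinearMap.comp_apply g, ← LinearMap.comp_assoc, hk₂]
    exact LinearMap.congr_fun t.h₂_comp_f_fromZero x
  obtain ⟨k₁, hk₁⟩ := exists_comp_eq_of_injective_of_range_le hf hrange
  exact ⟨⟨k₁, k₂, hk₁⟩, HHom.ext_fromZero (by subst hv; exact hk₂)⟩

/-- Let `Λ` be an Artin algebra and `0 → A →f→ B →g→ C → 0` an almost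
split sequence in `mod Λ`. Then `0 → (A →id→ A) → (A →f→ B) → (0 → C) → 0`, with left
map `(id_A, f)` and right map `(0, g)`, is an almost split sequence in `H(Λ)` ending
at `(0 → C)`. -/
theorem stmt_3
    (Λ : Type u) [Ring Λ]
    (A B C : Type u) [AddCommGroup A] [Module Λ A] [AddCommGroup B] [Module Λ B]
    [AddCommGroup C] [Module Λ C]
    (f : A →ₗ[Λ] B) (g : B →ₗ[Λ] C) (h : IsAlmostSplitSeq Λ f g) :
    IsAlmostSplitSeqH
      (A := HObj.ofId A) (B := HObj.of f) (C := HObj.fromZero C)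
      ⟨LinearMap.id, f, by ext x; rfl⟩
      ⟨0, g, by
        ext x
        have : f x ∈ LinearMap.ker g := h.exact ▸ LinearMap.mem_range_self f x
        exact (LinearMap.mem_ker.mp this).symm⟩ := by
  refine ⟨⟨h.finA, h.finA⟩, ⟨h.finA, h.finB⟩, HObj.fin_fromZero h.finC,
    Function.injective_id, h.inj, fun _ => ⟨0, Subsingleton.elim _ _⟩, h.surj,
    LinearMap.range_id.trans LinearMap.ker_zero.symm, h.exact, ?_, isIndecH_ofId h.indecA,
    isIndecH_fromZero h.indecC, fun T hT t ht => ?_⟩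
  · exact fun hsplit => h.not_split ((isSplitEpiH_fromZero_iff _).mp hsplit)
  · obtain ⟨k₂, hk₂⟩ := h.lift T.Y hT.2 t.h₂ (mt (isSplitEpiH_fromZero_iff t).mpr ht)
    exact HHom.exists_comp_eq_of_lift_h₂ h.inj h.exact _ rfl t hk₂
end

section
/- Let Λ be an Artin algebra and let 0 → A →f→ B →g→ C → 0 and 0 → A' →f'→ B' →g'→ A → 0 be almost split sequences in mod Λ. Then the object (B' →f∘g'→ B) of H(Λ) is indecomposable. -/
universe u

section Core

variable (Λ : Type u) [Ring Λ]

variable {Λ}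

/-!
A decomposition `B' = U₁ ⊕ U₂`, `B = V₁ ⊕ V₂` of `(B' → B)` induces, since `f` is injective,
a decomposition `A = g'(U₁) ⊕ g'(U₂)`; as `A` is indecomposable, say `g'(U₁) = 0`. Then `U₁` is a
direct summand of `B'` inside `ker g' ≅ A'`, which forces `U₁ = 0` because `A'` is indecomposable
and `g'` does not split. Hence `ker g = f(A) = f g'(U₂) ⊆ V₂`, and dually `V₁ = 0` because `C` is
indecomposable and `g` does not split.
-/

section Decompositions

open Submodule LinearMap

variable {Λ : Type u} [Ring Λ] {K M N : Type u} [AddCommGroup K] [Module Λ K]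
  [AddCommGroup M] [Module Λ M] [AddCommGroup N] [Module Λ N]

lemma isSplitEpiMod_of_isCompl_ker {g : M →ₗ[Λ] N} (hg : Function.Surjective g)
    {W : Submodule Λ M} (hW : IsCompl (ker g) W) : IsSplitEpiMod Λ g := by
  refine ⟨W.subtype ∘ₗ (quotientEquivOfIsCompl _ W hW).toLinearMap ∘ₗ
    (g.quotKerEquivOfSurjective hg).symm.toLinearMap, LinearMap.ext fun n => ?_⟩
  obtain ⟨w, hw⟩ := (quotientEquivOfIsCompl _ W hW).symm.surjective
    ((g.quotKerEquivOfSurjective hg).symm n)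
  rw [← (g.quotKerEquivOfSurjective hg).apply_symm_apply n, ← hw,
    quotientEquivOfIsCompl_symm_apply, quotKerEquivOfSurjective_apply_mk]
  simp

lemma disjoint_of_disjoint_map {f : M →ₗ[Λ] N} (hf : Function.Injective f)
    {p q : Submodule Λ M} (h : Disjoint (map f p) (map f q)) : Disjoint p q := by
  rw [disjoint_iff, ← (map_injective_of_injective hf).eq_iff, map_inf f hf, Submodule.map_bot]
  exact h.eq_bot

lemma isCompl_map_of_surjective {g : M →ₗ[Λ] N} (hg : Function.Surjective g)
    {V₁ V₂ : Submodule Λ M} (hV : IsCompl V₁ V₂) (h : Disjoint (map g V₁) (map g V₂)) :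
    IsCompl (map g V₁) (map g V₂) :=
  ⟨h, by
    rw [codisjoint_iff, ← Submodule.map_sup, hV.sup_eq_top, Submodule.map_top,
      range_eq_top.mpr hg]⟩

lemma isCompl_comap_of_le_range {f : K →ₗ[Λ] M} (hf : Function.Injective f)
    {U₁ U₂ : Submodule Λ M} (hU : IsCompl U₁ U₂) (hle : U₁ ≤ range f) :
    IsCompl (comap f U₁) (comap f U₂) := by
  refine ⟨?_, ?_⟩
  · rw [disjoint_iff, ← comap_inf, hU.inf_eq_bot, comap_bot, ker_eq_bot.mpr hf]
  · rw [codisjoint_iff]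
    apply map_injective_of_injective hf
    rw [Submodule.map_sup, map_comap_eq, map_comap_eq, inf_eq_right.mpr hle, inf_comm,
      ← sup_inf_assoc_of_le _ hle, hU.sup_eq_top, top_inf_eq, Submodule.map_top]

lemma eq_bot_of_isCompl_of_le_ker {f : K →ₗ[Λ] M} {g : M →ₗ[Λ] N} (hf : Function.Injective f)
    (hK : IsIndecMod Λ K) (hg : Function.Surjective g) (hfg : range f = ker g)
    (hns : ¬ IsSplitEpiMod Λ g) {U₁ U₂ : Submodule Λ M} (hU : IsCompl U₁ U₂)
    (hle : U₁ ≤ ker g) : U₁ = ⊥ := by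
  rw [← hfg] at hle
  rcases hK.2 _ _ (isCompl_comap_of_le_range hf hU hle) with h | h
  · rw [← inf_eq_right.mpr hle, ← map_comap_eq, h, Submodule.map_bot]
  · have hker : ker g = U₁ := by
      rw [← hfg, ← inf_top_eq (range f), ← hU.sup_eq_top, inf_comm, sup_inf_assoc_of_le _ hle,
        inf_comm, ← map_comap_eq, h, Submodule.map_bot, sup_bot_eq]
    exact (hns (isSplitEpiMod_of_isCompl_ker hg (hker ▸ hU))).elim

lemma eq_bot_of_isCompl_of_ker_le {g : M →ₗ[Λ] N} (hg : Function.Surjective g)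
    (hN : IsIndecMod Λ N) (hns : ¬ IsSplitEpiMod Λ g) {V₁ V₂ : Submodule Λ M}
    (hV : IsCompl V₁ V₂) (hker : ker g ≤ V₂) : V₁ = ⊥ := by
  rcases hN.2 _ _ (isCompl_map_of_surjective hg hV (disjoint_map_of_ker_le_right hV.disjoint hker))
    with h | h
  · exact hV.disjoint.eq_bot_of_le (le_trans (le_ker_iff_map.mpr h) hker)
  · have hker' : ker g = V₂ := le_antisymm hker (le_ker_iff_map.mpr h)
    exact (hns (isSplitEpiMod_of_isCompl_ker hg (hker' ▸ hV.symm))).elim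

lemma eq_bot_and_eq_bot_of_map_eq_bot {A B C A' B' : Type u}
    [AddCommGroup A] [Module Λ A] [AddCommGroup B] [Module Λ B] [AddCommGroup C] [Module Λ C]
    [AddCommGroup A'] [Module Λ A'] [AddCommGroup B'] [Module Λ B']
    {f : A →ₗ[Λ] B} {g : B →ₗ[Λ] C} {f' : A' →ₗ[Λ] B'} {g' : B' →ₗ[Λ] A}
    (hδ : IsAlmostSplitSeq Λ f g) (hδ' : IsAlmostSplitSeq Λ f' g')
    {U₁ U₂ : Submodule Λ B'} {V₁ V₂ : Submodule Λ B} (hU : IsCompl U₁ U₂) (hV : IsCompl V₁ V₂)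
    (hUV₂ : map (f ∘ₗ g') U₂ ≤ V₂) (h : map g' U₁ = ⊥) : U₁ = ⊥ ∧ V₁ = ⊥ := by
  have hU₁ : U₁ = ⊥ := eq_bot_of_isCompl_of_le_ker hδ'.inj hδ'.indecA hδ'.surj hδ'.exact
    hδ'.not_split hU (le_ker_iff_map.mpr h)
  refine ⟨hU₁, eq_bot_of_isCompl_of_ker_le hδ.surj hδ.indecC hδ.not_split hV ?_⟩
  have hU₂ : U₂ = ⊤ := eq_top_of_bot_isCompl (hU₁ ▸ hU)
  calc ker g = range f := hδ.exact.symm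
    _ = map (f ∘ₗ g') U₂ := by
      rw [hU₂, Submodule.map_top, range_comp_of_range_eq_top _ (range_eq_top.mpr hδ'.surj)]
    _ ≤ V₂ := hUV₂

end Decompositions

theorem stmt_6_general
    (Λ : Type u) [Ring Λ]
    (A B C A' B' : Type u)
    [AddCommGroup A] [Module Λ A] [AddCommGroup B] [Module Λ B] [AddCommGroup C] [Module Λ C]
    [AddCommGroup A'] [Module Λ A'] [AddCommGroup B'] [Module Λ B']
    (f : A →ₗ[Λ] B) (g : B →ₗ[Λ] C) (f' : A' →ₗ[Λ] B') (g' : B' →ₗ[Λ] A)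
    (hδ : IsAlmostSplitSeq Λ f g) (hδ' : IsAlmostSplitSeq Λ f' g') :
    IsIndecH (HObj.of (f ∘ₗ g')) := by
  have := hδ'.indecA.1
  refine ⟨.inl hδ'.inj.nontrivial, fun U₁ U₂ V₁ V₂ hU hV hUV₁ hUV₂ => ?_⟩
  have hdisj : Disjoint (U₁.map g') (U₂.map g') :=
    disjoint_of_disjoint_map hδ.inj <| hV.disjoint.mono (Submodule.map_comp g' f U₁ ▸ hUV₁)
      (Submodule.map_comp g' f U₂ ▸ hUV₂)
  rcases hδ.indecA.2 _ _ (isCompl_map_of_surjective hδ'.surj hU hdisj) with h | h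
  · exact .inl (eq_bot_and_eq_bot_of_map_eq_bot hδ hδ' hU hV hUV₂ h)
  · exact .inr (eq_bot_and_eq_bot_of_map_eq_bot hδ hδ' hU.symm hV.symm hUV₁ h)

/-- Let `Λ` be an Artin algebra and let `0 → A →f→ B →g→ C → 0` and
`0 → A' →f'→ B' →g'→ A → 0` be almost split sequences in `mod Λ`. Then the object
`(B' →f∘g'→ B)` of `H(Λ)` is indecomposable. -/
theorem stmt_6
    (R : Type u) [CommRing R] [IsArtinianRing R]
    (Λ : Type u) [Ring Λ] [Algebra R Λ] [Module.Finite R Λ]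
    (A B C A' B' : Type u)
    [AddCommGroup A] [Module Λ A] [AddCommGroup B] [Module Λ B] [AddCommGroup C] [Module Λ C]
    [AddCommGroup A'] [Module Λ A'] [AddCommGroup B'] [Module Λ B']
    (f : A →ₗ[Λ] B) (g : B →ₗ[Λ] C) (f' : A' →ₗ[Λ] B') (g' : B' →ₗ[Λ] A)
    (hδ : IsAlmostSplitSeq Λ f g) (hδ' : IsAlmostSplitSeq Λ f' g') :
    IsIndecH (HObj.of (f ∘ₗ g')) :=
  stmt_6_general Λ A B C A' B' f g f' g' hδ hδ'
end Core
end

section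
/- Let Λ be an Artin algebra, A an indecomposable non-projective Λ-module, and η : 0 → C →f→ B →g→ A → 0 an almost split sequence in mod Λ. Let p : P → A be the projective cover of A and e : C → I the injective envelope of C. Form the pullback of η along p, giving a short exact sequence 0 → C →s→ Z →l→ P → 0 and a map h : Z → B with h∘s = f and g∘h = p∘l, and form the pushout of η along e, giving a short exact sequence 0 → I →u→ X →v→ A → 0 and a map d : B → X with d∘f = u∘e and v∘d = g. Then 0 → (C →e→ I) → (Z →d∘h→ X) → (P →p→ A) → 0, with left map the pair (s, u) and right map the pair (l, v), is an almost split sequence in H(Λ) ending at (P →p→ A); in particular τ_H(P →p→ A) ≅ (C →e→ I). -/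
universe u

/-
Since `I` is injective, the pushout sequence `0 → I → X → A → 0` splits, and the pushout map
`d` is injective because `u ∘ e` is. A section `(q₁, q₂)` of `(l, v)` would make `h ∘ q₁` kill
`ker p`, so `h ∘ q₁` would factor through `p` and give a section of `g`.
Conversely, let `a : T → (P → A)` be no split epimorphism. Then the restriction of its second
component to the image of `T.f` is no split epimorphism either: a section of it lifts, as `P` is
projective, to an endomorphism of `P` over `p`, which is onto because `ker p` is superfluous, and
this yields a section of `a`. So the restriction lifts along `g`; the pullback property of `Z`
lifts the first component, and the splitting of `X` together with the injectivity of `I` extends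
the second one. The end terms are indecomposable because `C` and `A` are, `im e` being essential
and `ker p` superfluous.
-/

section MorphismCategory

variable {Λ : Type u} [Ring Λ] {A B C I M N P Q T X Z : Type u}
  [AddCommGroup A] [Module Λ A] [AddCommGroup B] [Module Λ B] [AddCommGroup C] [Module Λ C]
  [AddCommGroup I] [Module Λ I] [AddCommGroup M] [Module Λ M] [AddCommGroup N] [Module Λ N]
  [AddCommGroup P] [Module Λ P] [AddCommGroup Q] [Module Λ Q] [AddCommGroup T] [Module Λ T]
  [AddCommGroup X] [Module Λ X] [AddCommGroup Z] [Module Λ Z]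

theorem exists_comp_eq_of_surjective_of_ker_le {θ : M →ₗ[Λ] N} (hθ : Function.Surjective θ)
    {ψ : M →ₗ[Λ] Q} (hk : LinearMap.ker θ ≤ LinearMap.ker ψ) :
    ∃ ρ : N →ₗ[Λ] Q, ρ ∘ₗ θ = ψ :=
  ⟨(LinearMap.ker θ).liftQ ψ hk ∘ₗ (θ.quotKerEquivOfSurjective hθ).symm.toLinearMap, by
    ext x
    simp⟩

theorem IsProjCover.surjective_of_comp_eq {p : P →ₗ[Λ] A} (hp : IsProjCover Λ p)
    {φ : P →ₗ[Λ] P} (hφ : p ∘ₗ φ = p) : Function.Surjective φ := by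
  refine LinearMap.range_eq_top.1 (hp.superfluous _ (eq_top_iff.2 fun x _ => ?_))
  refine Submodule.mem_sup.2 ⟨φ x, LinearMap.mem_range_self φ x, x - φ x, ?_, by abel⟩
  rw [LinearMap.mem_ker, map_sub, ← LinearMap.comp_apply p φ, hφ, sub_self]

theorem isIndecH_of_projCover {p : P →ₗ[Λ] A} (hA : IsIndecMod Λ A) (hp : IsProjCover Λ p) :
    IsIndecH (HObj.of p) := by
  have key : ∀ {U U' : Submodule Λ P} {V : Submodule Λ A},
      IsCompl U U' → U.map p ≤ V → V = ⊥ → U = ⊥ := by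
    rintro U U' V hU hUV rfl
    have hUp : U ≤ LinearMap.ker p := by
      rwa [Submodule.map_le_iff_le_comap, Submodule.comap_bot] at hUV
    have hU' : U' = ⊤ := hp.superfluous U' <| eq_top_iff.2 <| by
      rw [← hU.sup_eq_top, sup_comm]
      exact sup_le_sup_left hUp U'
    exact eq_bot_of_isCompl_top (hU' ▸ hU)
  refine ⟨Or.inr hA.1, fun U₁ U₂ V₁ V₂ hU hV h₁ h₂ => ?_⟩
  rcases hA.2 V₁ V₂ hV with hV₁ | hV₂
  · exact Or.inl ⟨key hU h₁ hV₁, hV₁⟩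
  · exact Or.inr ⟨key hU.symm h₂ hV₂, hV₂⟩

theorem isIndecH_of_injEnv {e : C →ₗ[Λ] I} (hC : IsIndecMod Λ C) (he : IsInjEnv Λ e) :
    IsIndecH (HObj.of e) := by
  have key : ∀ {U U' : Submodule Λ C} {V V' : Submodule Λ I},
      IsCompl U U' → IsCompl V V' → U'.map e ≤ V' → U = ⊥ → V = ⊥ := by
    rintro U U' V V' hU hV hUV rfl
    have he_le : LinearMap.range e ≤ V' := by
      rwa [LinearMap.range_eq_map, ← eq_top_of_bot_isCompl hU]
    exact he.essential V (disjoint_iff.1 (hV.disjoint.mono_right he_le))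
  refine ⟨Or.inl hC.1, fun U₁ U₂ V₁ V₂ hU hV h₁ h₂ => ?_⟩
  rcases hC.2 U₁ U₂ hU with hU₁ | hU₂
  · exact Or.inl ⟨hU₁, key hU hV h₂ hU₁⟩
  · exact Or.inr ⟨hU₂, key hU.symm hV.symm h₁ hU₂⟩

theorem injective_of_pushout {f : C →ₗ[Λ] B} {g : B →ₗ[Λ] A}
    (hfg : LinearMap.range f = LinearMap.ker g) {e : C →ₗ[Λ] I} {u : I →ₗ[Λ] X}
    {v : X →ₗ[Λ] A} {d : B →ₗ[Λ] X} (hue : Function.Injective (u ∘ₗ e))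
    (hdf : d ∘ₗ f = u ∘ₗ e) (hvd : v ∘ₗ d = g) : Function.Injective d := by
  rw [← LinearMap.ker_eq_bot, eq_bot_iff]
  intro b hb
  rw [LinearMap.mem_ker] at hb
  obtain ⟨c, rfl⟩ : b ∈ LinearMap.range f := by
    rw [hfg, LinearMap.mem_ker, ← hvd, LinearMap.comp_apply, hb, map_zero]
  have hc : (u ∘ₗ e) c = (u ∘ₗ e) 0 := by
    rw [← hdf, LinearMap.comp_apply, hb, map_zero]
  rw [hue hc, map_zero]
  exact Submodule.zero_mem _

theorem exists_lift_of_pullback {f : C →ₗ[Λ] B} {g : B →ₗ[Λ] A} (hf : Function.Injective f)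
    (hfg : LinearMap.range f = LinearMap.ker g) {p : P →ₗ[Λ] A}
    {s : C →ₗ[Λ] Z} {l : Z →ₗ[Λ] P} {h : Z →ₗ[Λ] B} (hl : Function.Surjective l)
    (hsl : LinearMap.range s = LinearMap.ker l) (hhs : h ∘ₗ s = f) (hgh : g ∘ₗ h = p ∘ₗ l)
    {a : T →ₗ[Λ] P} {c : T →ₗ[Λ] B} (hac : p ∘ₗ a = g ∘ₗ c) :
    ∃ k : T →ₗ[Λ] Z, l ∘ₗ k = a ∧ h ∘ₗ k = c := by
  -- `(l, h)` identifies `Z` with the fibre product `{(x, b) | p x = g b}`.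
  have hinj : Function.Injective (l.prod h) := by
    rw [← LinearMap.ker_eq_bot, LinearMap.ker_prod, ← hsl, eq_bot_iff]
    rintro _ ⟨⟨c₀, rfl⟩, hc₀ : h (s c₀) = 0⟩
    rw [← LinearMap.comp_apply h s, hhs, ← map_zero f] at hc₀
    rw [hf hc₀, map_zero]
    exact Submodule.zero_mem _
  have hmem : ∀ t, (a t, c t) ∈ LinearMap.range (l.prod h) := by
    intro t
    obtain ⟨z, hz⟩ := hl (a t)
    obtain ⟨c₀, hc₀⟩ : h z - c t ∈ LinearMap.range f := by
      rw [hfg, LinearMap.mem_ker, map_sub, ← LinearMap.comp_apply g h, hgh,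
        LinearMap.comp_apply, hz, ← LinearMap.comp_apply p a, hac, LinearMap.comp_apply, sub_self]
    have hls : l (s c₀) = 0 := LinearMap.mem_ker.1 (hsl ▸ LinearMap.mem_range_self s c₀)
    refine ⟨z - s c₀, Prod.ext ?_ ?_⟩
    · change l (z - s c₀) = a t
      rw [map_sub, hz, hls, sub_zero]
    · change h (z - s c₀) = c t
      rw [map_sub, ← LinearMap.comp_apply h s, hhs, hc₀, sub_sub_cancel]
  let k := (LinearEquiv.ofInjective _ hinj).symm.toLinearMap ∘ₗ (a.prod c).codRestrict _ hmem
  have hk : ∀ t, (l (k t), h (k t)) = (a t, c t) := fun t =>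
    LinearEquiv.ofInjective_symm_apply (h := hinj) _ _
  exact ⟨k, LinearMap.ext fun t => congrArg Prod.fst (hk t),
    LinearMap.ext fun t => congrArg Prod.snd (hk t)⟩

theorem exists_lift_of_exact_of_injective_kernel [Module.Injective Λ I] {u : I →ₗ[Λ] X}
    {v : X →ₗ[Λ] A} (hu : Function.Injective u) (hv : Function.Surjective v)
    (huv : LinearMap.range u = LinearMap.ker v) {ι : M →ₗ[Λ] N} (hι : Function.Injective ι)
    (y : N →ₗ[Λ] A) (m : M →ₗ[Λ] X) (hym : v ∘ₗ m = y ∘ₗ ι) :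
    ∃ k : N →ₗ[Λ] X, v ∘ₗ k = y ∧ k ∘ₗ ι = m := by
  obtain ⟨ρ, hρ⟩ := Module.Injective.out u hu LinearMap.id
  obtain ⟨φ, -, rfl⟩ := (LinearMap.exact_iff.2 huv.symm).splitInjectiveEquiv hv
    ⟨ρ, LinearMap.ext hρ⟩
  obtain ⟨j, hj⟩ := Module.Injective.out ι hι (LinearMap.fst Λ I A ∘ₗ φ.toLinearMap ∘ₗ m)
  refine ⟨φ.symm.toLinearMap ∘ₗ j.prod y, by ext; simp, ?_⟩
  ext x
  apply φ.injective
  refine Prod.ext (by simpa using hj x) ?_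
  simpa using (LinearMap.congr_fun hym x).symm

theorem isSplitEpiH_of_isSplitEpiMod_comp_subtype {S T : HObj Λ} (hS : IsProjCover Λ S.f)
    (a : HHom T S) (ha : IsSplitEpiMod Λ (a.h₂ ∘ₗ (LinearMap.range T.f).subtype)) :
    IsSplitEpiH a := by
  obtain ⟨w, hw⟩ := ha
  have := hS.proj
  obtain ⟨r, hr⟩ := Module.projective_lifting_property T.f.rangeRestrict (w ∘ₗ S.f)
    T.f.surjective_rangeRestrict
  have hfr : T.f ∘ₗ r = (LinearMap.range T.f).subtype ∘ₗ w ∘ₗ S.f := by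
    rw [← hr]
    rfl
  have hφ : S.f ∘ₗ a.h₁ ∘ₗ r = S.f := by
    rw [← LinearMap.comp_assoc, a.comm, LinearMap.comp_assoc, hfr, ← LinearMap.comp_assoc,
      ← LinearMap.comp_assoc, hw, LinearMap.id_comp]
  obtain ⟨ξ, hξ⟩ := Module.projective_lifting_property (a.h₁ ∘ₗ r) LinearMap.id
    (hS.surjective_of_comp_eq hφ)
  have hξS : S.f ∘ₗ ξ = S.f := by
    rw [← hφ, LinearMap.comp_assoc, hξ, LinearMap.comp_id, hφ]
  refine ⟨⟨r ∘ₗ ξ, (LinearMap.range T.f).subtype ∘ₗ w, ?_⟩, HHom.ext hξ hw⟩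
  rw [← LinearMap.comp_assoc, hfr, LinearMap.comp_assoc, LinearMap.comp_assoc, hξS,
    LinearMap.comp_assoc]

theorem not_isSplitEpiH_of_pullback {g : B →ₗ[Λ] A} {p : P →ₗ[Λ] A} {l : Z →ₗ[Λ] P}
    {h : Z →ₗ[Λ] B} {d : B →ₗ[Λ] X} {v : X →ₗ[Λ] A} (hg : ¬ IsSplitEpiMod Λ g)
    (hp : Function.Surjective p) (hd : Function.Injective d) (hgh : g ∘ₗ h = p ∘ₗ l)
    (hcomm : p ∘ₗ l = v ∘ₗ d ∘ₗ h) :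
    ¬ IsSplitEpiH (⟨l, v, hcomm⟩ : HHom (HObj.of (d ∘ₗ h)) (HObj.of p)) := by
  rintro ⟨q, hq⟩
  let k : P →ₗ[Λ] B := h ∘ₗ q.h₁
  have hdk : ∀ x, d (k x) = q.h₂ (p x) := LinearMap.congr_fun q.comm
  have hlq : ∀ x, l (q.h₁ x) = x := LinearMap.congr_fun (congrArg HHom.h₁ hq)
  have hker : LinearMap.ker p ≤ LinearMap.ker k := fun x hx => by
    rw [LinearMap.mem_ker] at hx ⊢
    apply hd
    rw [hdk, hx, map_zero]
    exact map_zero q.h₂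
  obtain ⟨w, hw⟩ := exists_comp_eq_of_surjective_of_ker_le hp hker
  refine hg ⟨w, (LinearMap.cancel_right hp).1 (LinearMap.ext fun x => ?_)⟩
  calc g (w (p x)) = g (k x) := by rw [← hw]; rfl
    _ = p (l (q.h₁ x)) := LinearMap.congr_fun hgh (q.h₁ x)
    _ = p x := congrArg p (hlq x)

theorem exists_lift_of_not_isSplitEpiH [Module.Injective Λ I] {f : C →ₗ[Λ] B} {g : B →ₗ[Λ] A}
    (hη : IsAlmostSplitSeq Λ f g) {p : P →ₗ[Λ] A} (hp : IsProjCover Λ p)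
    {s : C →ₗ[Λ] Z} {l : Z →ₗ[Λ] P} {h : Z →ₗ[Λ] B} (hl : Function.Surjective l)
    (hsl : LinearMap.range s = LinearMap.ker l) (hhs : h ∘ₗ s = f) (hgh : g ∘ₗ h = p ∘ₗ l)
    {u : I →ₗ[Λ] X} {v : X →ₗ[Λ] A} {d : B →ₗ[Λ] X} (hu : Function.Injective u)
    (hv : Function.Surjective v) (huv : LinearMap.range u = LinearMap.ker v) (hvd : v ∘ₗ d = g)
    (hcomm : p ∘ₗ l = v ∘ₗ d ∘ₗ h) {T : HObj Λ} (hT : T.Fin) (a : HHom T (HObj.of p))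
    (ha : ¬ IsSplitEpiH a) :
    ∃ k : HHom T (HObj.of (d ∘ₗ h)),
      (⟨l, v, hcomm⟩ : HHom (HObj.of (d ∘ₗ h)) (HObj.of p)).comp k = a := by
  have := hT.1
  let K := LinearMap.range T.f
  let a₁ : T.X →ₗ[Λ] P := a.h₁
  let a₂ : T.Y →ₗ[Λ] A := a.h₂
  have ha₁₂ : p ∘ₗ a₁ = a₂ ∘ₗ T.f := a.comm
  obtain ⟨b, hb⟩ := hη.lift K inferInstance (a₂ ∘ₗ K.subtype)
    (mt (isSplitEpiH_of_isSplitEpiMod_comp_subtype hp a) ha)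
  obtain ⟨k₁, hk₁l, hk₁h⟩ := exists_lift_of_pullback hη.inj hη.exact hl hsl hhs hgh
    (a := a₁) (c := b ∘ₗ T.f.rangeRestrict) (by rw [ha₁₂, ← LinearMap.comp_assoc, hb]; rfl)
  obtain ⟨k₂, hk₂v, hk₂⟩ := exists_lift_of_exact_of_injective_kernel hu hv huv
    K.injective_subtype a₂ (d ∘ₗ b) (by rw [← LinearMap.comp_assoc, hvd, hb])
  refine ⟨⟨k₁, k₂, ?_⟩, HHom.ext hk₁l hk₂v⟩
  change (d ∘ₗ h) ∘ₗ k₁ = k₂ ∘ₗ T.f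
  rw [LinearMap.comp_assoc, hk₁h, ← LinearMap.comp_assoc, ← hk₂, LinearMap.comp_assoc]
  rfl

end MorphismCategory

/-- Let `Λ` be an Artin algebra, `A` an indecomposable non-projective
`Λ`-module and `η : 0 → C →f→ B →g→ A → 0` an almost split sequence in `mod Λ`. Let
`p : P → A` be the projective cover and `e : C → I` the injective envelope. The
pullback of `η` along `p` gives `0 → C →s→ Z →l→ P → 0` together with `h : Z → B`
satisfying `h∘s = f` and `g∘h = p∘l`, and the pushout of `η` along `e` gives
`0 → I →u→ X →v→ A → 0` together with `d : B → X` satisfying `d∘f = u∘e` and `v∘d = g`.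
Then `0 → (C →e→ I) →(s,u)→ (Z →d∘h→ X) →(l,v)→ (P →p→ A) → 0` is an almost split
sequence in `H(Λ)` ending at `(P →p→ A)`; in particular `τ_H(P →p→ A) ≅ (C →e→ I)`. -/
theorem stmt_8
    (Λ : Type u) [Ring Λ]
    (A B C P I Z X : Type u)
    [AddCommGroup A] [Module Λ A] [AddCommGroup B] [Module Λ B] [AddCommGroup C] [Module Λ C]
    [AddCommGroup P] [Module Λ P] [AddCommGroup I] [Module Λ I]
    [AddCommGroup Z] [Module Λ Z] [AddCommGroup X] [Module Λ X]
    [Module.Finite Λ P] [Module.Finite Λ I] [Module.Finite Λ Z] [Module.Finite Λ X]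
    (hA : IsIndecMod Λ A)
    (f : C →ₗ[Λ] B) (g : B →ₗ[Λ] A) (hη : IsAlmostSplitSeq Λ f g)
    (p : P →ₗ[Λ] A) (hp : IsProjCover Λ p)
    (e : C →ₗ[Λ] I) (he : IsInjEnv Λ e)
    -- the pullback of `η` along `p`:
    (s : C →ₗ[Λ] Z) (l : Z →ₗ[Λ] P) (h : Z →ₗ[Λ] B)
    (hs_inj : Function.Injective s) (hl_surj : Function.Surjective l)
    (hsl : LinearMap.range s = LinearMap.ker l)
    (hhs : h ∘ₗ s = f) (hgh : g ∘ₗ h = p ∘ₗ l)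
    -- the pushout of `η` along `e`:
    (u : I →ₗ[Λ] X) (v : X →ₗ[Λ] A) (d : B →ₗ[Λ] X)
    (hu_inj : Function.Injective u) (hv_surj : Function.Surjective v)
    (huv : LinearMap.range u = LinearMap.ker v)
    (hdf : d ∘ₗ f = u ∘ₗ e) (hvd : v ∘ₗ d = g) :
    IsAlmostSplitSeqH
      (A := HObj.of e) (B := HObj.of (d ∘ₗ h)) (C := HObj.of p)
      ⟨s, u, by
        apply LinearMap.ext
        intro x
        have h1 := LinearMap.congr_fun hhs x
        have h2 := LinearMap.congr_fun hdf x
        show d (h (s x)) = u (e x)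
        exact (congrArg d h1).trans h2⟩
      ⟨l, v, by
        apply LinearMap.ext
        intro z
        have h1 := LinearMap.congr_fun hvd (h z)
        have h2 := LinearMap.congr_fun hgh z
        show p (l z) = v (d (h z))
        exact h2.symm.trans h1.symm⟩
    ∧ TauHRel (HObj.of e) (HObj.of p) := by
  have := he.inj_obj
  have hd : Function.Injective d := injective_of_pushout hη.exact (hu_inj.comp he.inj) hdf hvd
  refine ⟨?seq, _, _, _, ?seq⟩
  exact
    { finA := ⟨hη.finA, ‹Module.Finite Λ I›⟩
      finB := ⟨‹Module.Finite Λ Z›, ‹Module.Finite Λ X›⟩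
      finC := ⟨‹Module.Finite Λ P›, hη.finC⟩
      inj₁ := hs_inj
      inj₂ := hu_inj
      surj₁ := hl_surj
      surj₂ := hv_surj
      exact₁ := hsl
      exact₂ := huv
      not_split := not_isSplitEpiH_of_pullback hη.not_split hp.surj hd hgh _
      indecA := isIndecH_of_injEnv hη.indecA he
      indecC := isIndecH_of_projCover hA hp
      lift := fun _ hT a ha => exists_lift_of_not_isSplitEpiH hη hp hl_surj hsl hhs hgh hu_inj
        hv_surj huv hvd _ hT a ha }
end

section
/- Let Λ be an Artin algebra and P an indecomposable Λ-module that is both projective and injective, such that rad(P) is indecomposable and non-injective. Then the inclusion i : rad(P) → P is an injective envelope of rad(P), and (P →id→ P) is isomorphic to a direct summand of the middle term of the almost split sequence in H(Λ) starting at (rad(P) →i→ P). -/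
universe u

/-!
Since `P` is injective, the inclusion `rad P → P` extends along the monomorphism `u₂` of an
almost split sequence `0 → (rad P → P) →u→ 𝔹 →v→ C → 0`, giving `w₂ : 𝔹.Y → P`; put
`w₁ = w₂ ∘ 𝔹.f`, which restricts to the inclusion on `rad P`. By Fitting's lemma the
indecomposable projective `P` is local, so either `w₁` is onto, and then projectivity of `P`
splits `(w₁, w₂) : 𝔹 → (P →id→ P)`, or the image of `w₁` lies in `rad P`, and then `(w₁, w₂)`
is a retraction of `u`, which an almost split sequence does not allow.
Essentiality of `rad P ⊆ P` holds because a simple submodule outside a maximal submodule `M`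
would be a direct complement of `M`.
-/

open LinearMap

section LinearAlgebra

variable {Λ : Type*} [Ring Λ] {A B C : Type*} [AddCommGroup A] [Module Λ A]
  [AddCommGroup B] [Module Λ B] [AddCommGroup C] [Module Λ C]

theorem LinearMap.exists_comp_eq_of_ker_le {v : B →ₗ[Λ] C} (hv : Function.Surjective v)
    {g : B →ₗ[Λ] A} (h : ker v ≤ ker g) : ∃ σ : C →ₗ[Λ] A, σ ∘ₗ v = g := by
  refine ⟨(ker v).liftQ g h ∘ₗ (v.quotKerEquivOfSurjective hv).symm.toLinearMap, ?_⟩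
  ext x
  have hx : (v.quotKerEquivOfSurjective hv).symm (v x) = (ker v).mkQ x :=
    (LinearEquiv.symm_apply_eq _).mpr rfl
  simp [hx]

theorem LinearMap.exists_section_of_retraction {u : A →ₗ[Λ] B} {v : B →ₗ[Λ] C}
    (hv : Function.Surjective v) (hexact : range u = ker v) {r : B →ₗ[Λ] A}
    (hr : r ∘ₗ u = LinearMap.id) :
    ∃ σ : C →ₗ[Λ] B, σ ∘ₗ v = LinearMap.id - u ∘ₗ r ∧ v ∘ₗ σ = LinearMap.id := by
  have hvu : v ∘ₗ u = 0 := range_le_ker_iff.mp hexact.le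
  obtain ⟨σ, hσ⟩ := exists_comp_eq_of_ker_le hv (g := LinearMap.id - u ∘ₗ r) <| by
    rw [← hexact]
    rintro _ ⟨a, rfl⟩
    simp [← comp_apply r u, hr]
  refine ⟨σ, hσ, (cancel_right hv).mp ?_⟩
  rw [comp_assoc, hσ, comp_sub, ← comp_assoc, hvu, zero_comp, sub_zero, id_comp, comp_id]

def LinearEquiv.prodKerOfCompEqId (r : B →ₗ[Λ] A) (s : A →ₗ[Λ] B)
    (h : r ∘ₗ s = LinearMap.id) :
    B ≃ₗ[Λ] A × ker r :=
  have hker (x : B) : x - s (r x) ∈ ker r := by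
    simp [← comp_apply r s, h]
  LinearEquiv.ofLinearMap (r.prod (codRestrict (ker r) (LinearMap.id - s ∘ₗ r) hker))
    (s.coprod (ker r).subtype)
    (by ext a <;> simp [← comp_apply r s, h])
    (by ext x; simp)

end LinearAlgebra

section Indecomposable

variable {Λ : Type u} [Ring Λ] {P : Type u} [AddCommGroup P] [Module Λ P]

/-- Fitting's lemma. -/
theorem IsIndecMod.bijective_or_isNilpotent [IsArtinian Λ P] [IsNoetherian Λ P]
    (hP : IsIndecMod Λ P) (ψ : Module.End Λ P) : Function.Bijective ψ ∨ IsNilpotent ψ := by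
  obtain ⟨m, hcompl⟩ : ∃ m, IsCompl (ker (ψ ^ (m + 1))) (range (ψ ^ (m + 1))) :=
    ((Filter.tendsto_add_atTop_nat 1).eventually ψ.eventually_isCompl_ker_pow_range_pow).exists
  rcases hP.2 _ _ hcompl with hker | hrange
  · refine .inl (IsArtinian.bijective_of_injective_endomorphism ψ
      (Function.Injective.of_comp (f := ψ ^ m) ?_))
    rw [← Module.End.coe_mul, ← pow_succ]
    exact ker_eq_bot.mp hker
  · exact .inr ⟨m + 1, range_eq_bot.mp hrange⟩

theorem IsIndecMod.le_modRad_of_ne_top [Module.Projective Λ P] [IsArtinian Λ P]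
    [IsNoetherian Λ P] (hP : IsIndecMod Λ P) {N : Submodule Λ P} (hN : N ≠ ⊤) :
    N ≤ modRad Λ P := by
  refine le_sInf fun M (hM : IsCoatom M) => by_contra fun hNM => ?_
  have hsurj : Function.Surjective (M.mkQ ∘ₗ N.subtype) := by
    rw [← range_eq_top, range_comp, Submodule.range_subtype, Submodule.map_mkQ_eq_top,
      sup_comm]
    exact hM.2 _ (right_lt_sup.mpr hNM)
  obtain ⟨φ, hφ⟩ := Module.projective_lifting_property (M.mkQ ∘ₗ N.subtype) M.mkQ hsurj
  set ψ : Module.End Λ P := N.subtype ∘ₗ φ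
  -- `ψ` induces the identity on the simple module `P ⧸ M`, hence is not nilpotent.
  have hψ (k : ℕ) : M.mkQ ∘ₗ (ψ ^ k) = M.mkQ := by
    induction k with
    | zero => rfl
    | succ k ih => rw [pow_succ, Module.End.mul_eq_comp, ← comp_assoc, ih, ← comp_assoc, hφ]
  rcases hP.bijective_or_isNilpotent ψ with hbij | ⟨n, hn⟩
  · exact hN (top_le_iff.mp fun x _ => by obtain ⟨y, rfl⟩ := hbij.2 x; exact (φ y).2)
  · exact hM.1 (by rw [← M.ker_mkQ, ← hψ n, hn, comp_zero, ker_zero])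

theorem IsIndecMod.le_modRad_of_isAtom (hP : IsIndecMod Λ P) (hrad : modRad Λ P ≠ ⊥)
    {S : Submodule Λ P} (hS : IsAtom S) : S ≤ modRad Λ P := by
  refine le_sInf fun M (hM : IsCoatom M) => by_contra fun hSM => ?_
  rcases hP.2 S M ⟨hS.not_le_iff_disjoint.mp hSM, (hM.not_le_iff_codisjoint.mp hSM).symm⟩
    with hS0 | hM0
  · exact hS.1 hS0
  · exact hrad (le_bot_iff.mp (hM0 ▸ sInf_le hM))

theorem IsIndecMod.isInjEnv_modRad_subtype [Module.Injective Λ P] [IsArtinian Λ P]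
    (hP : IsIndecMod Λ P) (hrad : modRad Λ P ≠ ⊥) : IsInjEnv Λ (modRad Λ P).subtype := by
  refine ⟨‹_›, Submodule.injective_subtype _, fun N hN => ?_⟩
  rw [Submodule.range_subtype] at hN
  refine (eq_bot_or_exists_atom_le N).resolve_right fun ⟨S, hS, hSN⟩ => hS.1 ?_
  exact le_bot_iff.mp (hN ▸ le_inf hSN (hP.le_modRad_of_isAtom hrad hS))

end Indecomposable

section MorphismCategory

variable {Λ : Type u} [Ring Λ]

theorem HObj.exists_hIso_dsum_of_comp_eq_id {M B : HObj Λ} (s : HHom M B) (r : HHom B M)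
    (h : r.comp s = HHom.id M) : ∃ N : HObj Λ, Nonempty (HIso B (M.dsum N)) := by
  have hr₁ : r.h₁ ∘ₗ s.h₁ = LinearMap.id := congrArg HHom.h₁ h
  have hr₂ : r.h₂ ∘ₗ s.h₂ = LinearMap.id := congrArg HHom.h₂ h
  have hker (x : B.X) (hx : x ∈ ker r.h₁) : B.f x ∈ ker r.h₂ := by
    simp [← comp_apply r.h₂ B.f, ← r.comm, mem_ker.mp hx]
  refine ⟨HObj.of (B.f.restrict hker), ⟨LinearEquiv.prodKerOfCompEqId _ _ hr₁,
    LinearEquiv.prodKerOfCompEqId _ _ hr₂, fun x => ?_⟩⟩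
  have hs := LinearMap.congr_fun s.comm (r.h₁ x)
  have hr := LinearMap.congr_fun r.comm x
  simp only [comp_apply] at hs hr
  refine Prod.ext hr (Subtype.ext ?_)
  change B.f (x - s.h₁ (r.h₁ x)) = B.f x - s.h₂ (r.h₂ (B.f x))
  rw [map_sub, hs, hr]

theorem HHom.isSplitEpiH_of_isSplitMonoH {A B C : HObj Λ} {u : HHom A B} {v : HHom B C}
    (hv₁ : Function.Surjective v.h₁) (hv₂ : Function.Surjective v.h₂)
    (hexact₁ : range u.h₁ = ker v.h₁) (hexact₂ : range u.h₂ = ker v.h₂)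
    (hu : IsSplitMonoH u) : IsSplitEpiH v := by
  obtain ⟨r, hr⟩ := hu
  obtain ⟨σ₁, hσv₁, hvσ₁⟩ := exists_section_of_retraction hv₁ hexact₁ (congrArg HHom.h₁ hr)
  obtain ⟨σ₂, hσv₂, hvσ₂⟩ := exists_section_of_retraction hv₂ hexact₂ (congrArg HHom.h₂ hr)
  have hcomm : B.f ∘ₗ σ₁ = σ₂ ∘ₗ C.f := by
    refine (cancel_right hv₁).mp ?_
    rw [comp_assoc, hσv₁, comp_assoc, v.comm, ← comp_assoc, hσv₂, comp_sub, sub_comp,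
      comp_id, id_comp, ← comp_assoc r.h₁ u.h₁, u.comm]
    simp only [comp_assoc, r.comm]
  exact ⟨⟨σ₁, σ₂, hcomm⟩, HHom.ext hvσ₁ hvσ₂⟩

theorem IsAlmostSplitSeqH.not_isSplitMonoH {A B C : HObj Λ} {u : HHom A B} {v : HHom B C}
    (h : IsAlmostSplitSeqH u v) : ¬ IsSplitMonoH u := fun hu =>
  h.not_split (HHom.isSplitEpiH_of_isSplitMonoH h.surj₁ h.surj₂ h.exact₁ h.exact₂ hu)

theorem IsIndecMod.exists_hIso_ofId_dsum {P : Type u} [AddCommGroup P] [Module Λ P]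
    [Module.Projective Λ P] [Module.Injective Λ P] [IsArtinian Λ P] [IsNoetherian Λ P]
    (hP : IsIndecMod Λ P) {B : HObj Λ} (u : HHom (HObj.of (modRad Λ P).subtype) B)
    (hu₂ : Function.Injective u.h₂) (hu : ¬ IsSplitMonoH u) :
    ∃ N : HObj Λ, Nonempty (HIso B ((HObj.ofId P).dsum N)) := by
  obtain ⟨w₂, hw₂⟩ := ‹Module.Injective Λ P›.out u.h₂ hu₂ LinearMap.id
  set w₁ : B.X →ₗ[Λ] P := w₂ ∘ₗ B.f
  by_cases hw₁ : range w₁ = ⊤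
  · obtain ⟨s₁, hs₁⟩ :=
      Module.projective_lifting_property w₁ LinearMap.id (range_eq_top.mp hw₁)
    exact HObj.exists_hIso_dsum_of_comp_eq_id ⟨s₁, B.f ∘ₗ s₁, rfl⟩ ⟨w₁, w₂, rfl⟩
      (HHom.ext hs₁ hs₁)
  · have hle := hP.le_modRad_of_ne_top hw₁
    refine (hu ⟨⟨w₁.codRestrict _ fun x => hle ⟨x, rfl⟩, w₂, rfl⟩, HHom.ext ?_ ?_⟩).elim
    · refine LinearMap.ext fun (a : modRad Λ P) => Subtype.ext ?_
      change w₂ (B.f (u.h₁ a)) = a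
      exact (congrArg w₂ (LinearMap.congr_fun u.comm a)).trans (hw₂ _)
    · exact LinearMap.ext hw₂

end MorphismCategory

theorem stmt_16_general
    (R : Type u) [CommRing R] [IsArtinianRing R]
    (Λ : Type u) [Ring Λ] [Algebra R Λ] [Module.Finite R Λ]
    (P : Type u) [AddCommGroup P] [Module Λ P] [Module.Finite Λ P]
    (hP : IsIndecMod Λ P) (hPproj : Module.Projective Λ P) (hPinj : Module.Injective Λ P)
    (hrad : IsIndecMod Λ ↥(modRad Λ P)) :
    IsInjEnv Λ (modRad Λ P).subtype ∧
    ∀ (𝔹 Cc : HObj Λ) (u : HHom (HObj.of (modRad Λ P).subtype) 𝔹) (v : HHom 𝔹 Cc),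
      IsAlmostSplitSeqH u v →
      ∃ N : HObj Λ, Nonempty (HIso 𝔹 ((HObj.ofId P).dsum N)) := by
  have : IsArtinianRing Λ := .of_finite R Λ
  have : IsNoetherianRing Λ := .of_finite R Λ
  have hrad_ne : modRad Λ P ≠ ⊥ := Submodule.nontrivial_iff_ne_bot.mp hrad.1
  exact ⟨hP.isInjEnv_modRad_subtype hrad_ne,
    fun _ _ u _ hseq => hP.exists_hIso_ofId_dsum u hseq.inj₂ hseq.not_isSplitMonoH⟩

/-- Let `Λ` be an Artin algebra and `P` an indecomposable
projective-injective `Λ`-module such that `rad(P)` is indecomposable and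
non-injective. Then the inclusion `i : rad(P) → P` is an injective envelope, and
`(P →id→ P)` is isomorphic to a direct summand of the middle term of the almost split
sequence in `H(Λ)` starting at `(rad(P) →i→ P)`. -/
theorem stmt_16
    (R : Type u) [CommRing R] [IsArtinianRing R]
    (Λ : Type u) [Ring Λ] [Algebra R Λ] [Module.Finite R Λ]
    (P : Type u) [AddCommGroup P] [Module Λ P] [Module.Finite Λ P]
    (hP : IsIndecMod Λ P) (hPproj : Module.Projective Λ P) (hPinj : Module.Injective Λ P)
    (hrad : IsIndecMod Λ ↥(modRad Λ P)) (hradni : ¬ Module.Injective Λ ↥(modRad Λ P)) :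
    IsInjEnv Λ (modRad Λ P).subtype ∧
    ∀ (𝔹 Cc : HObj Λ) (u : HHom (HObj.of (modRad Λ P).subtype) 𝔹) (v : HHom 𝔹 Cc),
      IsAlmostSplitSeqH u v →
      ∃ N : HObj Λ, Nonempty (HIso 𝔹 ((HObj.ofId P).dsum N)) :=
  stmt_16_general R Λ P hP hPproj hPinj hrad
end
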